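/- arXiv:1607.07600 — 4 statements merged into one kernel-verified Lean document; each statement's English description precedes it below -/
import Mathlib

section
/- Let A be a d×ν matrix with nonnegative integer entries and let B = {z_1, …, z_L} ⊆ Ker_Z(A). Then B is a Markov basis for A if and only if the set of binomials {u^{z_l⁺} − u^{z_l⁻} : l = 1, …, L} generates the toric ideal I_A in k[u_1, …, u_ν]. -/
/-!
Along a path of moves `x = x₀, x₁, …, x_m = y` the difference `u^x - u^y` telescopes into the
sum of the `u^{x_{i-1}} - u^{x_i}`, each a monomial multiple of a generator binomial. Conversely,
"joined by a path of moves" is a congruence `~` on the monoid `ℕ^ν`, and the algebra map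
`k[u] → k[ℕ^ν/~]`, `u^x ↦ [x]`, kills every generator binomial; so if `u^x - u^y` lies in the
ideal they generate, then `[x] = [y]`. Since `u^x - u^y ∈ I_A` exactly when `x` and `y` lie in
a common fiber, the two statements are equivalent.
-/

open Finset MvPolynomial

/-- `B ⊆ Ker_ℤ(A)` is a Markov basis for a nonnegative integer configuration matrix `A`
if for every fiber `F_t = {x ∈ ℤ_{≥0}^ν : A x = t}` the graph on `F_t` whose edges join
`x, y` with `x - y ∈ B` or `y - x ∈ B` is connected.  (Since every step difference lies in
`Ker_ℤ(A)`, any path starting in a fiber stays in that fiber, so connectivity of every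
fiber is equivalent to: any two nonnegative tables with the same `A`-value are joined by a
path of moves through nonnegative tables.) -/
def IsMarkovBasis {d ν : ℕ} (A : Matrix (Fin d) (Fin ν) ℕ) (B : Set (Fin ν → ℤ)) : Prop :=
  ∀ x y : Fin ν → ℕ,
    (∀ i, ∑ j, A i j * x j = ∑ j, A i j * y j) →
    Relation.ReflTransGen
      (fun a b : Fin ν → ℕ =>
        (fun j => (a j : ℤ) - (b j : ℤ)) ∈ B ∨ (fun j => (b j : ℤ) - (a j : ℤ)) ∈ B)
      x y

/-- The toric ideal `I_A ⊆ k[u_1,…,u_ν]`: the ideal generated by all binomials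
`u^{z⁺} - u^{z⁻}` where `z = z⁺ - z⁻` ranges over the integer kernel of `A`. -/
noncomputable def toricIdeal (k : Type*) [Field k] {d ν : ℕ} (A : Matrix (Fin d) (Fin ν) ℕ) :
    Ideal (MvPolynomial (Fin ν) k) :=
  Ideal.span { f | ∃ z : Fin ν → ℤ, (∀ i, ∑ j, (A i j : ℤ) * z j = 0) ∧
    f = (∏ j, X j ^ (z j).toNat) - ∏ j, X j ^ (-z j).toNat }

section Moves

variable {σ : Type*} {B : Set (σ → ℤ)}

def IsMove (B : Set (σ → ℤ)) (a b : σ → ℕ) : Prop :=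
  (fun j => (a j : ℤ) - b j) ∈ B ∨ (fun j => (b j : ℤ) - a j) ∈ B

theorem IsMove.add_right {a b : σ → ℕ} (h : IsMove B a b) (c : σ → ℕ) :
    IsMove B (a + c) (b + c) := by
  simpa only [IsMove, Pi.add_apply, Nat.cast_add, add_sub_add_right_eq_sub] using h

instance : Std.Symm (IsMove B) := ⟨fun _ _ => Or.symm⟩

def moveCon (B : Set (σ → ℤ)) : AddCon (σ → ℕ) where
  r := Relation.ReflTransGen (IsMove B)
  iseqv := ⟨fun _ => .refl, Std.Symm.symm _ _, .trans⟩
  add' {w x y z} hwx hyz := by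
    have hy := Relation.ReflTransGen.lift (· + y) (fun _ _ h => h.add_right y) _ _ hwx
    have hx := Relation.ReflTransGen.lift (x + ·) (fun _ _ h => by
      simpa only [add_comm x] using h.add_right x) _ _ hyz
    exact hy.trans hx

end Moves

section Binomials

variable {σ : Type*} [Fintype σ] (R : Type*) [CommRing R] {B : Set (σ → ℤ)}

noncomputable def toricBinomial (w : σ → ℤ) : MvPolynomial σ R :=
  ∏ j, X j ^ (w j).toNat - ∏ j, X j ^ (-w j).toNat

theorem prod_X_pow_sub_prod_X_pow_eq_mul_toricBinomial {a b : σ → ℕ} {w : σ → ℤ}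
    (h : ∀ j, (a j : ℤ) - b j = w j) :
    (∏ j, X j ^ a j - ∏ j, X j ^ b j : MvPolynomial σ R) =
      (∏ j, X j ^ min (a j) (b j)) * toricBinomial R w := by
  have ha j : a j = min (a j) (b j) + (w j).toNat := by have := h j; omega
  have hb j : b j = min (a j) (b j) + (-w j).toNat := by have := h j; omega
  simp only [toricBinomial, mul_sub, ← prod_mul_distrib, ← pow_add, ← ha, ← hb]

theorem IsMove.prod_X_pow_sub_mem_span {a b : σ → ℕ} (h : IsMove B a b) :
    (∏ j, X j ^ a j - ∏ j, X j ^ b j : MvPolynomial σ R) ∈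
      Ideal.span (toricBinomial R '' B) := by
  rcases h with hab | hba
  · rw [prod_X_pow_sub_prod_X_pow_eq_mul_toricBinomial R (fun j => rfl)]
    exact Ideal.mul_mem_left _ _ (Ideal.subset_span ⟨_, hab, rfl⟩)
  · rw [← neg_sub, prod_X_pow_sub_prod_X_pow_eq_mul_toricBinomial R (fun j => rfl)]
    exact neg_mem (Ideal.mul_mem_left _ _ (Ideal.subset_span ⟨_, hba, rfl⟩))

variable [DecidableEq σ]

noncomputable def moveAlgHom (B : Set (σ → ℤ)) :
    MvPolynomial σ R →ₐ[R] AddMonoidAlgebra R (moveCon B).Quotient :=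
  aeval fun j => AddMonoidAlgebra.single ((Pi.single j 1 : σ → ℕ) : (moveCon B).Quotient) 1

theorem moveAlgHom_prod_X_pow (a : σ → ℕ) :
    moveAlgHom R B (∏ j, X j ^ a j) =
      AddMonoidAlgebra.single (a : (moveCon B).Quotient) 1 := by
  have hsum : ∑ j, a j • ((Pi.single j 1 : σ → ℕ) : (moveCon B).Quotient) = a := by
    simp only [← AddCon.coe_mk', ← map_nsmul, ← map_sum, ← Pi.single_smul, smul_eq_mul, mul_one,
      univ_sum_single]
  simp only [moveAlgHom, map_prod, map_pow, aeval_X, AddMonoidAlgebra.single_pow, one_pow,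
    AddMonoidAlgebra.prod_single, hsum, prod_const_one]

theorem moveAlgHom_toricBinomial {w : σ → ℤ} (hw : w ∈ B) :
    moveAlgHom R B (toricBinomial R w) = 0 := by
  have hmove : IsMove B (fun j => (w j).toNat) (fun j => (-w j).toNat) :=
    .inl (by simpa only [Int.toNat_sub_toNat_neg] using hw)
  rw [toricBinomial, map_sub, moveAlgHom_prod_X_pow, moveAlgHom_prod_X_pow,
    (AddCon.eq _).2 (Relation.ReflTransGen.single hmove), sub_self]

theorem prod_X_pow_sub_mem_span_toricBinomial_iff [Nontrivial R] {a b : σ → ℕ} :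
    (∏ j, X j ^ a j - ∏ j, X j ^ b j : MvPolynomial σ R) ∈
        Ideal.span (toricBinomial R '' B) ↔
      Relation.ReflTransGen (IsMove B) a b := by
  constructor
  · intro h
    have hker : Ideal.span (toricBinomial R '' B) ≤ RingHom.ker (moveAlgHom R B) := by
      rw [Ideal.span_le]
      rintro _ ⟨w, hw, rfl⟩
      exact moveAlgHom_toricBinomial R hw
    have h0 := hker h
    rw [RingHom.mem_ker, map_sub, moveAlgHom_prod_X_pow, moveAlgHom_prod_X_pow,
      sub_eq_zero] at h0
    exact (AddCon.eq _).1 (AddMonoidAlgebra.single_left_injective one_ne_zero h0)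
  · intro h
    induction h with
    | refl => simp
    | tail _ hbc ih =>
      simpa only [sub_add_sub_cancel] using add_mem ih (hbc.prod_X_pow_sub_mem_span R)

end Binomials

theorem sum_mul_eq_sum_mul_iff {σ : Type*} [Fintype σ] {c x y : σ → ℕ} :
    ∑ j, c j * x j = ∑ j, c j * y j ↔ ∑ j, (c j : ℤ) * ((x j : ℤ) - y j) = 0 := by
  simp only [mul_sub, sum_sub_distrib, sub_eq_zero]
  exact_mod_cast Iff.rfl

theorem toricIdeal_eq_span {d ν : ℕ} (k : Type*) [Field k] (A : Matrix (Fin d) (Fin ν) ℕ) :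
    toricIdeal k A =
      Ideal.span (toricBinomial k '' {w | ∀ i, ∑ j, (A i j : ℤ) * w j = 0}) := by
  rw [toricIdeal]
  congr 1
  ext f
  simp only [Set.mem_ofPred_eq, Set.mem_image, toricBinomial, eq_comm]

/-- **Diaconis–Sturmfels, Theorem 3.1.**  Let `A` be a `d × ν` nonnegative integer matrix
and `B = {z_1, …, z_L} ⊆ Ker_ℤ(A)`.  Then `B` is a Markov basis for `A` if and only if the
binomials `u^{z_l⁺} - u^{z_l⁻}`, `l = 1, …, L`, generate the toric ideal `I_A`. -/
theorem isMarkovBasis_iff_generates_toricIdeal (k : Type*) [Field k] {d ν L : ℕ}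
    (A : Matrix (Fin d) (Fin ν) ℕ) (z : Fin L → (Fin ν → ℤ))
    (hz : ∀ l, ∀ i, ∑ j, (A i j : ℤ) * z l j = 0) :
    IsMarkovBasis A (Set.range z) ↔
      Ideal.span (Set.range (fun l : Fin L =>
          ((∏ j, X j ^ (z l j).toNat) - ∏ j, X j ^ (-z l j).toNat :
            MvPolynomial (Fin ν) k))) = toricIdeal k A := by
  change _ ↔ Ideal.span (Set.range (toricBinomial k ∘ z)) = _
  rw [Set.range_comp, toricIdeal_eq_span]
  constructor
  · intro hM
    refine le_antisymm (Ideal.span_mono (Set.image_mono ?_)) ?_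
    · rintro _ ⟨l, rfl⟩
      exact hz l
    · rw [Ideal.span_le]
      rintro _ ⟨w, hw, rfl⟩
      refine (prod_X_pow_sub_mem_span_toricBinomial_iff k).2 (hM _ _ fun i => ?_)
      rw [sum_mul_eq_sum_mul_iff]
      simpa only [Int.toNat_sub_toNat_neg] using hw i
  · intro hspan x y hxy
    refine (prod_X_pow_sub_mem_span_toricBinomial_iff k).1 ?_
    rw [hspan, prod_X_pow_sub_prod_X_pow_eq_mul_toricBinomial k (fun j => rfl)]
    exact Ideal.mul_mem_left _ _
      (Ideal.subset_span ⟨_, fun i => sum_mul_eq_sum_mul_iff.1 (hxy i), rfl⟩)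
end

section
/- Fix I, J ≥ 2 and let A_{I,J} be the (I+J)×(IJ) nonnegative integer matrix sending a table x ∈ Z^{I×J} to its row sums and column sums: A_{I,J}x = ((Σ_j x_{ij})_{i=1..I}, (Σ_i x_{ij})_{j=1..J}). Then the set B of basic moves z^{(i,i',j,j')} = e_{ij} + e_{i'j'} − e_{ij'} − e_{i'j}, for 1 ≤ i < i' ≤ I and 1 ≤ j < j' ≤ J (where e_{ij} denotes the standard unit table), is a Markov basis for A_{I,J}. -/
/-!
A basic move applied to a table changes only four cells and preserves all margins. If `x ≠ y`
lie in the same fiber, pick a cell `(i, j)` where `x` exceeds `y`; equal row sums give a cell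
`(i, j')` in the same row where `y` exceeds `x`, and equal column sums a cell `(i', j')` in that
column where `x` exceeds `y`. Subtracting the basic move on `i, i', j, j'` from `x` stays
nonnegative and strictly lowers the total excess `∑ (x - y)⁺`, so induction on the excess
connects `x` to `y`.
-/

open Finset

/-- `B` is a Markov basis for the configuration matrix `A_{I,J}` of the independence model
(sending a table to its row and column sums): every two nonnegative integer tables with
the same row sums and the same column sums are connected by a path of moves from `±B`
through nonnegative integer tables (equivalently, each graph `G_{t,B}` on a fiber `F_t`
is connected). -/
def IsMarkovBasisIndep {I J : ℕ} (B : Set (Fin I → Fin J → ℤ)) : Prop :=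
  ∀ x y : Fin I → Fin J → ℕ,
    (∀ i, ∑ j, x i j = ∑ j, y i j) →
    (∀ j, ∑ i, x i j = ∑ i, y i j) →
    Relation.ReflTransGen
      (fun a b : Fin I → Fin J → ℕ =>
        (fun i j => (a i j : ℤ) - (b i j : ℤ)) ∈ B ∨
        (fun i j => (b i j : ℤ) - (a i j : ℤ)) ∈ B)
      x y

/-- The set of basic moves `z^{(i,i',j,j')} = e_{ij} + e_{i'j'} - e_{ij'} - e_{i'j}`
for `i < i'`, `j < j'`. -/
def basicMovesIJ (I J : ℕ) : Set (Fin I → Fin J → ℤ) :=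
  { z | ∃ (i i' : Fin I) (j j' : Fin J), i < i' ∧ j < j' ∧
    z = fun p q =>
      (if p = i ∧ q = j then 1 else 0) + (if p = i' ∧ q = j' then 1 else 0)
        - (if p = i ∧ q = j' then 1 else 0) - (if p = i' ∧ q = j then 1 else 0) }

namespace IndependenceModel

variable {I J : ℕ}

def basicMove (i i' : Fin I) (j j' : Fin J) : Fin I → Fin J → ℤ := fun p q =>
  (if p = i ∧ q = j then 1 else 0) + (if p = i' ∧ q = j' then 1 else 0)
    - (if p = i ∧ q = j' then 1 else 0) - (if p = i' ∧ q = j then 1 else 0)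

lemma sum_basicMove_row (i i' : Fin I) (j j' : Fin J) (p : Fin I) :
    ∑ q, basicMove i i' j j' p q = 0 := by
  simp [basicMove, sum_add_distrib, sum_sub_distrib, ite_and]

lemma sum_basicMove_col (i i' : Fin I) (j j' : Fin J) (q : Fin J) :
    ∑ p, basicMove i i' j j' p q = 0 := by
  simp [basicMove, sum_add_distrib, sum_sub_distrib, ite_and]

lemma basicMove_swap_rows (i i' : Fin I) (j j' : Fin J) :
    basicMove i' i j j' = -basicMove i i' j j' := by
  funext p q; simp only [basicMove, Pi.neg_apply]; ring

lemma basicMove_swap_cols (i i' : Fin I) (j j' : Fin J) :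
    basicMove i i' j' j = -basicMove i i' j j' := by
  funext p q; simp only [basicMove, Pi.neg_apply]; ring

lemma basicMove_mem_or_neg_mem {i i' : Fin I} {j j' : Fin J} (hi : i ≠ i') (hj : j ≠ j') :
    basicMove i i' j j' ∈ basicMovesIJ I J ∨ -basicMove i i' j j' ∈ basicMovesIJ I J := by
  rcases hi.lt_or_gt with hi | hi <;> rcases hj.lt_or_gt with hj | hj
  · exact .inl ⟨i, i', j, j', hi, hj, rfl⟩
  · exact .inr (basicMove_swap_cols i i' j j' ▸ ⟨i, i', j', j, hi, hj, rfl⟩)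
  · exact .inr (basicMove_swap_rows i i' j j' ▸ ⟨i', i, j, j', hi, hj, rfl⟩)
  · refine .inl ?_
    rw [← neg_neg (basicMove i i' j j'), ← basicMove_swap_rows, ← basicMove_swap_cols]
    exact ⟨i', i, j', j, hi, hj, rfl⟩

def MoveRel (B : Set (Fin I → Fin J → ℤ)) (x y : Fin I → Fin J → ℕ) : Prop :=
  (fun i j => (x i j : ℤ) - (y i j : ℤ)) ∈ B ∨ (fun i j => (y i j : ℤ) - (x i j : ℤ)) ∈ B

lemma moveRel_of_sub_eq_basicMove {x y : Fin I → Fin J → ℕ} {i i' : Fin I} {j j' : Fin J}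
    (hi : i ≠ i') (hj : j ≠ j') (h : (fun p q => (x p q : ℤ) - y p q) = basicMove i i' j j') :
    MoveRel (basicMovesIJ I J) x y := by
  have h' : (fun p q => (y p q : ℤ) - x p q) = -basicMove i i' j j' := by
    rw [← h]; funext p q; simp
  rw [MoveRel, h, h']
  exact basicMove_mem_or_neg_mem hi hj

def SameMargins (x y : Fin I → Fin J → ℕ) : Prop :=
  (∀ i, ∑ j, x i j = ∑ j, y i j) ∧ (∀ j, ∑ i, x i j = ∑ i, y i j)

lemma SameMargins.trans {x y w : Fin I → Fin J → ℕ} (hxy : SameMargins x y)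
    (hyw : SameMargins y w) : SameMargins x w :=
  ⟨fun i => (hxy.1 i).trans (hyw.1 i), fun j => (hxy.2 j).trans (hyw.2 j)⟩

lemma SameMargins.symm {x y : Fin I → Fin J → ℕ} (h : SameMargins x y) : SameMargins y x :=
  ⟨fun i => (h.1 i).symm, fun j => (h.2 j).symm⟩

lemma sameMargins_of_cast_eq_sub {x x' : Fin I → Fin J → ℕ} {z : Fin I → Fin J → ℤ}
    (hrow : ∀ p, ∑ q, z p q = 0) (hcol : ∀ q, ∑ p, z p q = 0)
    (h : ∀ p q, (x' p q : ℤ) = x p q - z p q) : SameMargins x' x := by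
  refine ⟨fun p => ?_, fun q => ?_⟩ <;> zify
  · simp [h, sum_sub_distrib, hrow]
  · simp [h, sum_sub_distrib, hcol]

lemma exists_lt_of_sum_eq_of_lt {ι M : Type*} [AddCommMonoid M] [LinearOrder M]
    [IsOrderedCancelAddMonoid M] {s : Finset ι} {f g : ι → M}
    (h : ∑ i ∈ s, f i = ∑ i ∈ s, g i) {a : ι} (ha : a ∈ s) (hlt : f a < g a) :
    ∃ b ∈ s, g b < f b := by
  by_contra! H
  exact (sum_lt_sum H ⟨a, ha, hlt⟩).ne h

lemma SameMargins.exists_gt_in_row {x y : Fin I → Fin J → ℕ} (h : SameMargins x y)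
    {i : Fin I} {j : Fin J} (hlt : x i j < y i j) : ∃ j', y i j' < x i j' := by
  simpa using exists_lt_of_sum_eq_of_lt (h.1 i) (mem_univ j) hlt

lemma SameMargins.exists_gt_in_col {x y : Fin I → Fin J → ℕ} (h : SameMargins x y)
    {i : Fin I} {j : Fin J} (hlt : x i j < y i j) : ∃ i', y i' j < x i' j := by
  simpa using exists_lt_of_sum_eq_of_lt (h.2 j) (mem_univ i) hlt

lemma exists_corner {x y : Fin I → Fin J → ℕ} (hxy : x ≠ y) (h : SameMargins x y) :
    ∃ i i' j j', y i j < x i j ∧ x i j' < y i j' ∧ y i' j' < x i' j' := by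
  obtain ⟨i, j, hij⟩ : ∃ i j, y i j < x i j := by
    obtain ⟨i, j, hne⟩ : ∃ i j, x i j ≠ y i j := by
      by_contra! H
      exact hxy (funext₂ H)
    rcases hne.lt_or_gt with hlt | hlt
    · exact ⟨i, h.exists_gt_in_row hlt⟩
    · exact ⟨i, j, hlt⟩
  obtain ⟨j', hij'⟩ := h.symm.exists_gt_in_row hij
  obtain ⟨i', hi'j'⟩ := h.exists_gt_in_col hij'
  exact ⟨i, i', j, j', hij, hij', hi'j'⟩

def applyMove (x : Fin I → Fin J → ℕ) (z : Fin I → Fin J → ℤ) : Fin I → Fin J → ℕ :=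
  fun p q => (x p q - z p q).toNat

lemma cast_applyMove {x : Fin I → Fin J → ℕ} {z : Fin I → Fin J → ℤ} (h : ∀ p q, z p q ≤ x p q)
    (p : Fin I) (q : Fin J) : (applyMove x z p q : ℤ) = x p q - z p q :=
  Int.toNat_of_nonneg (sub_nonneg.mpr (h p q))

lemma basicMove_le_of_one_le {x : Fin I → Fin J → ℕ} {i i' : Fin I} {j j' : Fin J}
    (h : 1 ≤ x i j) (h' : 1 ≤ x i' j') (p : Fin I) (q : Fin J) :
    basicMove i i' j j' p q ≤ x p q := by
  by_cases hp : p = i <;> by_cases hp' : p = i' <;> by_cases hq : q = j <;>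
    by_cases hq' : q = j' <;> subst_vars <;> simp [basicMove, *]

/-- Truncated subtraction: only the cells where `x` exceeds `y` contribute. -/
def excess (x y : Fin I → Fin J → ℕ) : ℕ := ∑ p, ∑ q, (x p q - y p q)

lemma sum_sum_indicator (a : Fin I) (b : Fin J) :
    ∑ p, ∑ q, (if p = a ∧ q = b then 1 else 0 : ℕ) = 1 := by
  simp [ite_and]

section Excess

variable {x x' y : Fin I → Fin J → ℕ} {i i' : Fin I} {j j' : Fin J}

/-- The move lowers the excess by one at `(i, j)` and at `(i', j')`, leaves it at `0` at
`(i, j')`, and raises it by at most one at `(i', j)`. -/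
lemma sub_add_indicator_le (hx' : ∀ p q, (x' p q : ℤ) = x p q - basicMove i i' j j' p q)
    (hij : y i j < x i j) (hij' : x i j' < y i j') (hi'j' : y i' j' < x i' j')
    (p : Fin I) (q : Fin J) :
    x' p q - y p q + (if p = i ∧ q = j then 1 else 0) + (if p = i' ∧ q = j' then 1 else 0) ≤
      x p q - y p q + (if p = i' ∧ q = j then 1 else 0) := by
  have hpq := hx' p q
  clear hx'
  by_cases hp : p = i <;> by_cases hp' : p = i' <;> by_cases hq : q = j <;>
    by_cases hq' : q = j' <;> subst_vars <;> simp [basicMove, *] at hpq ⊢ <;> omega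

lemma excess_lt (hx' : ∀ p q, (x' p q : ℤ) = x p q - basicMove i i' j j' p q)
    (hij : y i j < x i j) (hij' : x i j' < y i j') (hi'j' : y i' j' < x i' j') :
    excess x' y < excess x y := by
  have key : excess x' y + 1 + 1 ≤ excess x y + 1 := calc
    excess x' y + 1 + 1
      = ∑ p, ∑ q, (x' p q - y p q + (if p = i ∧ q = j then 1 else 0) +
          (if p = i' ∧ q = j' then 1 else 0)) := by
        simp only [excess, sum_add_distrib, sum_sum_indicator]
    _ ≤ ∑ p, ∑ q, (x p q - y p q + (if p = i' ∧ q = j then 1 else 0)) :=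
        sum_le_sum fun p _ => sum_le_sum fun q _ => sub_add_indicator_le hx' hij hij' hi'j' p q
    _ = excess x y + 1 := by simp only [excess, sum_add_distrib, sum_sum_indicator]
  omega

end Excess

lemma exists_moveRel_excess_lt {x y : Fin I → Fin J → ℕ} (hxy : x ≠ y) (h : SameMargins x y) :
    ∃ x', MoveRel (basicMovesIJ I J) x x' ∧ SameMargins x' y ∧ excess x' y < excess x y := by
  obtain ⟨i, i', j, j', hij, hij', hi'j'⟩ := exists_corner hxy h
  have hi : i ≠ i' := by rintro rfl; omega
  have hj : j ≠ j' := by rintro rfl; omega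
  have hle : ∀ p q, basicMove i i' j j' p q ≤ x p q :=
    basicMove_le_of_one_le (by omega) (by omega)
  have hx' := cast_applyMove hle
  refine ⟨applyMove x (basicMove i i' j j'), ?_, ?_, excess_lt hx' hij hij' hi'j'⟩
  · refine moveRel_of_sub_eq_basicMove hi hj (funext₂ fun p q => ?_)
    rw [hx']
    ring
  · exact (sameMargins_of_cast_eq_sub (sum_basicMove_row i i' j j')
      (sum_basicMove_col i i' j j') hx').trans h

theorem reflTransGen_moveRel_of_sameMargins {x y : Fin I → Fin J → ℕ} (h : SameMargins x y) :
    Relation.ReflTransGen (MoveRel (basicMovesIJ I J)) x y := by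
  induction hn : excess x y using Nat.strong_induction_on generalizing x with
  | _ n ih =>
    by_cases hxy : x = y
    · exact hxy ▸ .refl
    obtain ⟨x', hmove, h', hlt⟩ := exists_moveRel_excess_lt hxy h
    exact .head hmove (ih _ (hn ▸ hlt) h' rfl)

end IndependenceModel

theorem basicMoves_isMarkovBasis_general {I J : ℕ} :
    (∀ z ∈ basicMovesIJ I J, (∀ i, ∑ j, z i j = 0) ∧ (∀ j, ∑ i, z i j = 0)) ∧
      IsMarkovBasisIndep (basicMovesIJ I J) := by
  refine ⟨?_, fun x y hrow hcol =>
    IndependenceModel.reflTransGen_moveRel_of_sameMargins ⟨hrow, hcol⟩⟩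
  rintro z ⟨i, i', j, j', -, -, rfl⟩
  exact ⟨IndependenceModel.sum_basicMove_row i i' j j',
    IndependenceModel.sum_basicMove_col i i' j j'⟩

/-- **Basic moves form a Markov basis for the independence model.**
For `I, J ≥ 2`, the basic moves `e_{ij} + e_{i'j'} - e_{ij'} - e_{i'j}` (`i < i'`, `j < j'`)
all lie in `Ker_ℤ(A_{I,J})` and form a Markov basis for the configuration matrix `A_{I,J}`
of the independence model for `I × J` contingency tables. -/
theorem basicMoves_isMarkovBasis {I J : ℕ} (hI : 2 ≤ I) (hJ : 2 ≤ J) :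
    (∀ z ∈ basicMovesIJ I J, (∀ i, ∑ j, z i j = 0) ∧ (∀ j, ∑ i, z i j = 0)) ∧
      IsMarkovBasisIndep (basicMovesIJ I J) :=
  basicMoves_isMarkovBasis_general
end

section
/- Let A_{3,3,3} be the 27×27 configuration matrix of the no-three-factor-interaction model for 3×3×3 tables, sending x ∈ Z^{3×3×3} to its three two-dimensional marginals ((x_{ij+}), (x_{i+k}), (x_{+jk})). Let B be the set of the 27 basic moves, i.e., the moves z supported on a block {i_1,i_2}×{j_1,j_2}×{k_1,k_2} (with i_1<i_2, j_1<j_2, k_1<k_2) with z_{i_a j_b k_c} = (−1)^{a+b+c} on this block and 0 elsewhere. Then B is not a Markov basis for A_{3,3,3}; in particular, the graph G_{t,B} on the fiber determined by the marginals x_{ij+} = x_{i+k} = x_{+jk} given by the matrix with rows (2,1,1),(1,2,1),(1,1,2) is not connected. -/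
open Finset

/-- `B` is a Markov basis for the configuration matrix of the no-three-factor-interaction
model for `I × J × K` tables (sending a table to its three two-dimensional marginals):
every two nonnegative integer tables with the same two-dimensional marginals are joined by
a path of moves from `±B` through nonnegative integer tables. -/
def IsMarkovBasisN3 {I J K : ℕ} (B : Set (Fin I → Fin J → Fin K → ℤ)) : Prop :=
  ∀ x y : Fin I → Fin J → Fin K → ℕ,
    (∀ i j, ∑ k, x i j k = ∑ k, y i j k) →
    (∀ i k, ∑ j, x i j k = ∑ j, y i j k) →
    (∀ j k, ∑ i, x i j k = ∑ i, y i j k) →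
    Relation.ReflTransGen
      (fun a b : Fin I → Fin J → Fin K → ℕ =>
        (fun i j k => (a i j k : ℤ) - (b i j k : ℤ)) ∈ B ∨
        (fun i j k => (b i j k : ℤ) - (a i j k : ℤ)) ∈ B)
      x y

/-- The 27 basic moves for `3 × 3 × 3` tables: the moves supported on a block
`{i₁,i₂} × {j₁,j₂} × {k₁,k₂}` (`i₁ < i₂`, `j₁ < j₂`, `k₁ < k₂`) with value
`(-1)^{a+b+c}` at `(i_a, j_b, k_c)` and `0` elsewhere. -/
def basicMoves333 : Set (Fin 3 → Fin 3 → Fin 3 → ℤ) :=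
  { z | ∃ i₁ i₂ j₁ j₂ k₁ k₂ : Fin 3, i₁ < i₂ ∧ j₁ < j₂ ∧ k₁ < k₂ ∧
    z = fun p q r =>
      (if p = i₁ then -1 else if p = i₂ then 1 else 0) *
      (if q = j₁ then -1 else if q = j₂ then 1 else 0) *
      (if r = k₁ then -1 else if r = k₂ then 1 else 0) }

/-- The common two-dimensional marginal table with rows `(2,1,1), (1,2,1), (1,1,2)`. -/
def M₃ : Fin 3 → Fin 3 → ℕ := ![![2, 1, 1], ![1, 2, 1], ![1, 1, 2]]

/-- The isolated table in the fiber. -/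
def xT : Fin 3 → Fin 3 → Fin 3 → ℕ :=
  ![![![2,0,0],![0,0,1],![0,1,0]],
    ![![0,0,1],![0,2,0],![1,0,0]],
    ![![0,1,0],![1,0,0],![0,0,2]]]

/-- Another table in the fiber. -/
def yT : Fin 3 → Fin 3 → Fin 3 → ℕ :=
  ![![![0,1,1],![1,0,0],![1,0,0]],
    ![![1,0,0],![0,1,1],![0,1,0]],
    ![![1,0,0],![0,1,0],![0,0,2]]]

lemma core :
    ∀ i₁ i₂ j₁ j₂ k₁ k₂ : Fin 3, i₁ < i₂ → j₁ < j₂ → k₁ < k₂ →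
      (∃ p q r, (xT p q r : ℤ) <
        (if p = i₁ then -1 else if p = i₂ then 1 else 0) *
        (if q = j₁ then -1 else if q = j₂ then 1 else 0) *
        (if r = k₁ then -1 else if r = k₂ then 1 else 0)) ∧
      (∃ p q r, (xT p q r : ℤ) <
        -((if p = i₁ then -1 else if p = i₂ then 1 else 0) *
          (if q = j₁ then -1 else if q = j₂ then 1 else 0) *
          (if r = k₁ then -1 else if r = k₂ then 1 else 0))) := by decide

lemma xT_isolated (b : Fin 3 → Fin 3 → Fin 3 → ℕ) :
    ¬ ((fun i j k => (xT i j k : ℤ) - (b i j k : ℤ)) ∈ basicMoves333 ∨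
       (fun i j k => (b i j k : ℤ) - (xT i j k : ℤ)) ∈ basicMoves333) := by
  rintro (⟨i₁, i₂, j₁, j₂, k₁, k₂, h1, h2, h3, hz⟩ |
          ⟨i₁, i₂, j₁, j₂, k₁, k₂, h1, h2, h3, hz⟩)
  · obtain ⟨⟨p, q, r, hlt⟩, -⟩ := core i₁ i₂ j₁ j₂ k₁ k₂ h1 h2 h3
    have := congrFun (congrFun (congrFun hz p) q) r
    have hb : (0 : ℤ) ≤ (b p q r : ℤ) := Int.ofNat_nonneg _
    omega
  · obtain ⟨-, ⟨p, q, r, hlt⟩⟩ := core i₁ i₂ j₁ j₂ k₁ k₂ h1 h2 h3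
    have := congrFun (congrFun (congrFun hz p) q) r
    have hb : (0 : ℤ) ≤ (b p q r : ℤ) := Int.ofNat_nonneg _
    omega

lemma no_path :
    ¬ Relation.ReflTransGen
        (fun a b : Fin 3 → Fin 3 → Fin 3 → ℕ =>
          (fun i j k => (a i j k : ℤ) - (b i j k : ℤ)) ∈ basicMoves333 ∨
          (fun i j k => (b i j k : ℤ) - (a i j k : ℤ)) ∈ basicMoves333)
        xT yT := by
  intro h
  rcases h.cases_head with h | ⟨c, hc, -⟩
  · exact absurd h (by decide)
  · exact xT_isolated c hc

/-- **The basic moves do not form a Markov basis for the `3 × 3 × 3`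
no-three-factor-interaction model**; in particular the graph on the fiber of all
nonnegative `3 × 3 × 3` tables whose three two-dimensional marginals all equal the matrix
with rows `(2,1,1), (1,2,1), (1,1,2)` is not connected. -/
theorem basicMoves333_not_markovBasis :
    ¬ IsMarkovBasisN3 basicMoves333 ∧
    ¬ (∀ x y : Fin 3 → Fin 3 → Fin 3 → ℕ,
        ((∀ i j, ∑ k, x i j k = M₃ i j) ∧ (∀ i k, ∑ j, x i j k = M₃ i k) ∧
          (∀ j k, ∑ i, x i j k = M₃ j k)) →
        ((∀ i j, ∑ k, y i j k = M₃ i j) ∧ (∀ i k, ∑ j, y i j k = M₃ i k) ∧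
          (∀ j k, ∑ i, y i j k = M₃ j k)) →
        Relation.ReflTransGen
          (fun a b : Fin 3 → Fin 3 → Fin 3 → ℕ =>
            (fun i j k => (a i j k : ℤ) - (b i j k : ℤ)) ∈ basicMoves333 ∨
            (fun i j k => (b i j k : ℤ) - (a i j k : ℤ)) ∈ basicMoves333)
          x y) := by
  constructor
  · intro H
    exact no_path (H xT yT (by decide) (by decide) (by decide))
  · intro H
    exact no_path (H xT yT ⟨by decide, by decide, by decide⟩ ⟨by decide, by decide, by decide⟩)
end

section
/- Let A_{2,3,3} be the configuration matrix of the no-three-factor-interaction model for 2×3×3 tables, sending x ∈ Z^{2×3×3} to its three two-dimensional marginals ((x_{ij+}), (x_{i+k}), (x_{+jk})). Let B consist of: (i) the 9 basic moves, i.e., moves z supported on {1,2}×{j_1,j_2}×{k_1,k_2} (j_1<j_2, k_1<k_2) with z_{i_a j_b k_c} = (−1)^{a+b+c} on this block and 0 elsewhere; and (ii) the 6 degree-6 moves z defined by z_{1jk} = σ_{jk} − τ_{jk} and z_{2jk} = τ_{jk} − σ_{jk}, where {σ, τ} ranges over the 6 unordered pairs of 3×3 permutation matrices with disjoint supports (σ_{jk}τ_{jk}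 = 0 for all j,k). Then B is a Markov basis for A_{2,3,3}. -/
open Finset

set_option maxRecDepth 10000
set_option maxHeartbeats 1000000


/-- The `3 × 3` permutation matrix (over `ℤ`) of a permutation `π` of `{1,2,3}`. -/
def permMat (π : Equiv.Perm (Fin 3)) : Fin 3 → Fin 3 → ℤ :=
  fun a b => if π a = b then 1 else 0

/-- The 9 basic moves for `2 × 3 × 3` tables: the moves supported on
`{1,2} × {j₁,j₂} × {k₁,k₂}` (`j₁ < j₂`, `k₁ < k₂`) with value `(-1)^{a+b+c}` at
`(i_a, j_b, k_c)` and `0` elsewhere. -/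
def basicMoves233 : Set (Fin 2 → Fin 3 → Fin 3 → ℤ) :=
  { z | ∃ j₁ j₂ k₁ k₂ : Fin 3, j₁ < j₂ ∧ k₁ < k₂ ∧
    z = fun p q r =>
      (if p = 0 then -1 else 1) *
      (if q = j₁ then -1 else if q = j₂ then 1 else 0) *
      (if r = k₁ then -1 else if r = k₂ then 1 else 0) }

/-- The 6 degree-6 moves for `2 × 3 × 3` tables: `z_{1jk} = σ_{jk} - τ_{jk}`,
`z_{2jk} = τ_{jk} - σ_{jk}`, where `{σ, τ}` ranges over the unordered pairs of `3 × 3`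
permutation matrices with disjoint supports. -/
def deg6Moves233 : Set (Fin 2 → Fin 3 → Fin 3 → ℤ) :=
  { z | ∃ π ρ : Equiv.Perm (Fin 3), (∀ a, π a ≠ ρ a) ∧
    z = fun p q r =>
      if p = 0 then permMat π q r - permMat ρ q r else permMat ρ q r - permMat π q r }

namespace MB233

/-! ### Boolean certificate computation -/

def d3 (r k : Nat) : Nat := r / 3^k % 3
def hasV (r v : Nat) : Bool := (d3 r 0 == v) || (d3 r 1 == v) || (d3 r 2 == v)
def rOK (r : Nat) : Bool := hasV r 1 == hasV r 2
def rowsL : List Nat := (List.range 27).filter rOK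
def sel (r0 r1 r2 j : Nat) : Nat := if j == 0 then r0 else if j == 1 then r1 else r2
def colHasV (r0 r1 r2 k v : Nat) : Bool :=
  (d3 r0 k == v) || (d3 r1 k == v) || (d3 r2 k == v)
def colOK (r0 r1 r2 k : Nat) : Bool := colHasV r0 r1 r2 k 1 == colHasV r0 r1 r2 k 2
def L3 : List Nat := [0, 1, 2]
def swapB (r0 r1 r2 : Nat) : Bool :=
  L3.any fun a => L3.any fun a' => (a != a') &&
    (L3.any fun b => L3.any fun b' => (b != b') &&
      (d3 (sel r0 r1 r2 a) b == 1) && (d3 (sel r0 r1 r2 a') b' == 1) &&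
      (d3 (sel r0 r1 r2 a) b' == 2) && (d3 (sel r0 r1 r2 a') b == 2))
def permsL : List (Nat × Nat × Nat) := [(0,1,2),(0,2,1),(1,0,2),(1,2,0),(2,0,1),(2,1,0)]
def permHas (r0 r1 r2 v : Nat) : Bool :=
  permsL.any fun s => (d3 r0 s.1 == v) && (d3 r1 s.2.1 == v) && (d3 r2 s.2.2 == v)
def leaf (r0 r1 r2 : Nat) : Bool :=
  !(colOK r0 r1 r2 0 && colOK r0 r1 r2 1 && colOK r0 r1 r2 2 &&
    (hasV r0 1 || hasV r1 1 || hasV r2 1)) ||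
  (swapB r0 r1 r2 || (permHas r0 r1 r2 1 && permHas r0 r1 r2 2))

theorem mainB : (rowsL.all fun r0 => rowsL.all fun r1 => rowsL.all fun r2 => leaf r0 r1 r2) = true := by
  decide

/-! ### Bridge to `Fin 3` matrices -/

variable (c : Fin 3 → Fin 3 → Fin 3)

def encR (j : Fin 3) : ℕ := (c j 0).val + 3 * (c j 1).val + 9 * (c j 2).val

lemma encR_lt (j : Fin 3) : encR c j < 27 := by
  have h0 := (c j 0).isLt; have h1 := (c j 1).isLt; have h2 := (c j 2).isLt
  unfold encR; omega

lemma d3_encR (j : Fin 3) :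
    d3 (encR c j) 0 = (c j 0).val ∧ d3 (encR c j) 1 = (c j 1).val ∧
    d3 (encR c j) 2 = (c j 2).val := by
  have h0 := (c j 0).isLt; have h1 := (c j 1).isLt; have h2 := (c j 2).isLt
  unfold d3 encR
  norm_num
  omega

lemma beqFin (x v : Fin 3) : ((x.val == v.val) = true) ↔ x = v := by revert x v; decide

lemma fin3_exists (p : Fin 3 → Prop) : (∃ k, p k) ↔ p 0 ∨ p 1 ∨ p 2 := by
  constructor
  · rintro ⟨k, h⟩; fin_cases k
    · exact Or.inl h
    · exact Or.inr (Or.inl h)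
    · exact Or.inr (Or.inr h)
  · rintro (h | h | h) <;> exact ⟨_, h⟩

lemma hasV_iff (j v : Fin 3) : (hasV (encR c j) v.val = true) ↔ ∃ k, c j k = v := by
  obtain ⟨e0, e1, e2⟩ := d3_encR c j
  unfold hasV
  rw [e0, e1, e2, fin3_exists]
  simp only [Bool.or_eq_true, beqFin, or_assoc]

lemma colHasV_iff0 (v : Fin 3) :
    (colHasV (encR c 0) (encR c 1) (encR c 2) 0 v.val = true) ↔ ∃ j, c j 0 = v := by
  unfold colHasV
  rw [(d3_encR c 0).1, (d3_encR c 1).1, (d3_encR c 2).1, fin3_exists]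
  simp only [Bool.or_eq_true, beqFin, or_assoc]

lemma colHasV_iff1 (v : Fin 3) :
    (colHasV (encR c 0) (encR c 1) (encR c 2) 1 v.val = true) ↔ ∃ j, c j 1 = v := by
  unfold colHasV
  rw [(d3_encR c 0).2.1, (d3_encR c 1).2.1, (d3_encR c 2).2.1, fin3_exists]
  simp only [Bool.or_eq_true, beqFin, or_assoc]

lemma colHasV_iff2 (v : Fin 3) :
    (colHasV (encR c 0) (encR c 1) (encR c 2) 2 v.val = true) ↔ ∃ j, c j 2 = v := by
  unfold colHasV
  rw [(d3_encR c 0).2.2, (d3_encR c 1).2.2, (d3_encR c 2).2.2, fin3_exists]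
  simp only [Bool.or_eq_true, beqFin, or_assoc]


lemma rOK_true (j : Fin 3) (h : (∃ k, c j k = 1) ↔ (∃ k, c j k = 2)) :
    rOK (encR c j) = true := by
  unfold rOK
  rw [beq_iff_eq, Bool.eq_iff_iff]
  exact ((hasV_iff c j 1).trans h).trans (hasV_iff c j 2).symm

lemma mkPerm (v : Fin 3) (p0 p1 p2 : Fin 3) (hd : p0 ≠ p1 ∧ p0 ≠ p2 ∧ p1 ≠ p2)
    (h0 : c 0 p0 = v) (h1 : c 1 p1 = v) (h2 : c 2 p2 = v) :
    ∃ σ : Fin 3 → Fin 3, Function.Injective σ ∧ ∀ a, c a (σ a) = v := by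
  refine ⟨fun a => if a = 0 then p0 else if a = 1 then p1 else p2, ?_, ?_⟩
  · intro a b hab
    fin_cases a <;> fin_cases b <;> simp_all
  · intro a
    fin_cases a <;> simp [h0, h1, h2]

lemma perm_decode (v : Fin 3)
    (h : permHas (encR c 0) (encR c 1) (encR c 2) v.val = true) :
    ∃ σ : Fin 3 → Fin 3, Function.Injective σ ∧ ∀ a, c a (σ a) = v := by
  unfold permHas at h
  rw [List.any_eq_true] at h
  obtain ⟨s, hs, h⟩ := h
  simp only [Bool.and_eq_true] at h
  obtain ⟨⟨h0, h1⟩, h2⟩ := h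
  simp only [permsL, List.mem_cons, List.not_mem_nil, or_false] at hs
  rcases hs with rfl | rfl | rfl | rfl | rfl | rfl <;> dsimp only at h0 h1 h2
  · exact mkPerm c v 0 1 2 (by decide) ((beqFin _ v).1 (by rw [← (d3_encR c 0).1]; exact h0))
      ((beqFin _ v).1 (by rw [← (d3_encR c 1).2.1]; exact h1))
      ((beqFin _ v).1 (by rw [← (d3_encR c 2).2.2]; exact h2))
  · exact mkPerm c v 0 2 1 (by decide) ((beqFin _ v).1 (by rw [← (d3_encR c 0).1]; exact h0))
      ((beqFin _ v).1 (by rw [← (d3_encR c 1).2.2]; exact h1))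
      ((beqFin _ v).1 (by rw [← (d3_encR c 2).2.1]; exact h2))
  · exact mkPerm c v 1 0 2 (by decide) ((beqFin _ v).1 (by rw [← (d3_encR c 0).2.1]; exact h0))
      ((beqFin _ v).1 (by rw [← (d3_encR c 1).1]; exact h1))
      ((beqFin _ v).1 (by rw [← (d3_encR c 2).2.2]; exact h2))
  · exact mkPerm c v 1 2 0 (by decide) ((beqFin _ v).1 (by rw [← (d3_encR c 0).2.1]; exact h0))
      ((beqFin _ v).1 (by rw [← (d3_encR c 1).2.2]; exact h1))
      ((beqFin _ v).1 (by rw [← (d3_encR c 2).1]; exact h2))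
  · exact mkPerm c v 2 0 1 (by decide) ((beqFin _ v).1 (by rw [← (d3_encR c 0).2.2]; exact h0))
      ((beqFin _ v).1 (by rw [← (d3_encR c 1).1]; exact h1))
      ((beqFin _ v).1 (by rw [← (d3_encR c 2).2.1]; exact h2))
  · exact mkPerm c v 2 1 0 (by decide) ((beqFin _ v).1 (by rw [← (d3_encR c 0).2.2]; exact h0))
      ((beqFin _ v).1 (by rw [← (d3_encR c 1).2.1]; exact h1))
      ((beqFin _ v).1 (by rw [← (d3_encR c 2).1]; exact h2))

lemma swap_decode (h : swapB (encR c 0) (encR c 1) (encR c 2) = true) :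
    ∃ a a' b b' : Fin 3, a ≠ a' ∧ b ≠ b' ∧ c a b = 1 ∧ c a' b' = 1 ∧ c a b' = 2 ∧ c a' b = 2 := by
  unfold swapB at h
  rw [List.any_eq_true] at h; obtain ⟨a, ha, h⟩ := h
  rw [List.any_eq_true] at h; obtain ⟨a', ha', h⟩ := h
  rw [Bool.and_eq_true] at h; obtain ⟨hane, h⟩ := h
  rw [List.any_eq_true] at h; obtain ⟨b, hb, h⟩ := h
  rw [List.any_eq_true] at h; obtain ⟨b', hb', h⟩ := h
  simp only [Bool.and_eq_true] at h
  obtain ⟨⟨⟨⟨hbne, h1⟩, h2⟩, h3⟩, h4⟩ := h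
  have ha3 : a < 3 := by simp [L3] at ha; omega
  have ha'3 : a' < 3 := by simp [L3] at ha'; omega
  have hb3 : b < 3 := by simp [L3] at hb; omega
  have hb'3 : b' < 3 := by simp [L3] at hb'; omega
  have hsel : ∀ (m : ℕ) (hm : m < 3), sel (encR c 0) (encR c 1) (encR c 2) m = encR c ⟨m, hm⟩ := by
    intro m hm; interval_cases m <;> rfl
  rw [hsel a ha3] at h1 h3
  rw [hsel a' ha'3] at h2 h4
  have hd : ∀ (j : Fin 3) (m : ℕ) (hm : m < 3), d3 (encR c j) m = (c j ⟨m, hm⟩).val := by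
    intro j m hm
    interval_cases m
    · exact (d3_encR c j).1
    · exact (d3_encR c j).2.1
    · exact (d3_encR c j).2.2
  rw [hd _ b hb3] at h1
  rw [hd _ b' hb'3] at h2
  rw [hd _ b' hb'3] at h3
  rw [hd _ b hb3] at h4
  refine ⟨⟨a, ha3⟩, ⟨a', ha'3⟩, ⟨b, hb3⟩, ⟨b', hb'3⟩, ?_, ?_,
    (beqFin _ 1).1 h1, (beqFin _ 1).1 h2, (beqFin _ 2).1 h3, (beqFin _ 2).1 h4⟩
  · simp only [ne_eq, Fin.mk.injEq]
    simpa using hane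
  · simp only [ne_eq, Fin.mk.injEq]
    simpa using hbne

lemma key (h1 : ∀ j, (∃ k, c j k = 1) ↔ (∃ k, c j k = 2))
    (h2 : ∀ k, (∃ j, c j k = 1) ↔ (∃ j, c j k = 2))
    (h3 : ∃ j k, c j k = 1) :
    (∃ a a' b b' : Fin 3, a ≠ a' ∧ b ≠ b' ∧ c a b = 1 ∧ c a' b' = 1 ∧ c a b' = 2 ∧ c a' b = 2) ∨
    ((∃ σ : Fin 3 → Fin 3, Function.Injective σ ∧ ∀ a, c a (σ a) = 1) ∧
     (∃ τ : Fin 3 → Fin 3, Function.Injective τ ∧ ∀ a, c a (τ a) = 2)) := by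
  have hm : ∀ j, encR c j ∈ rowsL := fun j =>
    List.mem_filter.2 ⟨List.mem_range.2 (encR_lt c j), rOK_true c j (h1 j)⟩
  have hleaf : leaf (encR c 0) (encR c 1) (encR c 2) = true := by
    have h := mainB
    rw [List.all_eq_true] at h
    have h := h _ (hm 0); rw [List.all_eq_true] at h
    have h := h _ (hm 1); rw [List.all_eq_true] at h
    exact h _ (hm 2)
  have hc0 : colOK (encR c 0) (encR c 1) (encR c 2) 0 = true := by
    unfold colOK; rw [beq_iff_eq, Bool.eq_iff_iff]
    exact ((colHasV_iff0 c 1).trans (h2 0)).trans (colHasV_iff0 c 2).symm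
  have hc1 : colOK (encR c 0) (encR c 1) (encR c 2) 1 = true := by
    unfold colOK; rw [beq_iff_eq, Bool.eq_iff_iff]
    exact ((colHasV_iff1 c 1).trans (h2 1)).trans (colHasV_iff1 c 2).symm
  have hc2 : colOK (encR c 0) (encR c 1) (encR c 2) 2 = true := by
    unfold colOK; rw [beq_iff_eq, Bool.eq_iff_iff]
    exact ((colHasV_iff2 c 1).trans (h2 2)).trans (colHasV_iff2 c 2).symm
  have hne1 : (hasV (encR c 0) 1 || hasV (encR c 1) 1 || hasV (encR c 2) 1) = true := by
    obtain ⟨j, k, hjk⟩ := h3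
    have hj : hasV (encR c j) ((1 : Fin 3)).val = true := (hasV_iff c j 1).2 ⟨k, hjk⟩
    rw [Bool.or_eq_true, Bool.or_eq_true]
    fin_cases j
    · exact Or.inl (Or.inl hj)
    · exact Or.inl (Or.inr hj)
    · exact Or.inr hj
  have hconc : (swapB (encR c 0) (encR c 1) (encR c 2) ||
      (permHas (encR c 0) (encR c 1) (encR c 2) 1 &&
        permHas (encR c 0) (encR c 1) (encR c 2) 2)) = true := by
    unfold leaf at hleaf
    simp only [hc0, hc1, hc2, hne1, Bool.and_self, Bool.and_true, Bool.not_true,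
      Bool.false_or] at hleaf
    exact hleaf
  rw [Bool.or_eq_true] at hconc
  rcases hconc with hsw | hp
  · exact Or.inl (swap_decode c hsw)
  · rw [Bool.and_eq_true] at hp
    exact Or.inr ⟨perm_decode c 1 hp.1, perm_decode c 2 hp.2⟩


end MB233

namespace MB233

def basicZ (j1 j2 k1 k2 : Fin 3) : Fin 2 → Fin 3 → Fin 3 → ℤ := fun p q r =>
  (if p = 0 then -1 else 1) * (if q = j1 then -1 else if q = j2 then 1 else 0) *
  (if r = k1 then -1 else if r = k2 then 1 else 0)

lemma basicZ_mem {j1 j2 k1 k2 : Fin 3} (hj : j1 < j2) (hk : k1 < k2) :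
    basicZ j1 j2 k1 k2 ∈ basicMoves233 := ⟨j1, j2, k1, k2, hj, hk, rfl⟩

lemma basicZ_neg {j1 j2 k1 k2 : Fin 3} (hk : k1 ≠ k2) :
    (fun p q r => - basicZ j1 j2 k1 k2 p q r) = basicZ j1 j2 k2 k1 := by
  funext p q r
  unfold basicZ
  by_cases h1 : r = k1 <;> by_cases h2 : r = k2 <;> simp_all <;> ring

lemma basicZ_zero (j1 j2 k1 k2 : Fin 3) (q r : Fin 3) :
    basicZ j1 j2 k1 k2 0 q r =
      -((if q = j1 then -1 else if q = j2 then 1 else 0) *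
        (if r = k1 then -1 else if r = k2 then 1 else 0)) := by
  unfold basicZ
  rw [if_pos rfl]
  ring

lemma basicZ_one (j1 j2 k1 k2 : Fin 3) (q r : Fin 3) :
    basicZ j1 j2 k1 k2 1 q r = - basicZ j1 j2 k1 k2 0 q r := by
  unfold basicZ
  rw [if_pos rfl, if_neg (by decide : ¬ (1 : Fin 2) = 0)]
  ring

def deg6Z (π ρ : Equiv.Perm (Fin 3)) : Fin 2 → Fin 3 → Fin 3 → ℤ := fun p q r =>
  if p = 0 then permMat π q r - permMat ρ q r else permMat ρ q r - permMat π q r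

lemma deg6Z_mem {π ρ : Equiv.Perm (Fin 3)} (h : ∀ a, π a ≠ ρ a) :
    deg6Z π ρ ∈ deg6Moves233 := ⟨π, ρ, h, rfl⟩

lemma deg6Z_zero (π ρ : Equiv.Perm (Fin 3)) (q r : Fin 3) :
    deg6Z π ρ 0 q r = (if π q = r then 1 else 0) - (if ρ q = r then 1 else 0) := by
  unfold deg6Z permMat
  rw [if_pos rfl]

lemma deg6Z_one (π ρ : Equiv.Perm (Fin 3)) (q r : Fin 3) :
    deg6Z π ρ 1 q r = - deg6Z π ρ 0 q r := by
  unfold deg6Z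
  rw [if_pos rfl, if_neg (by decide : ¬ (1 : Fin 2) = 0)]
  ring

lemma basicZ_sum (j1 j2 k1 k2 : Fin 3) (hj : j1 ≠ j2) (hk : k1 ≠ k2) :
    (∀ i j, ∑ k, basicZ j1 j2 k1 k2 i j k = 0) ∧
    (∀ i k, ∑ j, basicZ j1 j2 k1 k2 i j k = 0) ∧
    (∀ j k, ∑ i, basicZ j1 j2 k1 k2 i j k = 0) := by
  revert hj hk
  revert j1 j2 k1 k2
  decide

lemma deg6Z_sum (π ρ : Equiv.Perm (Fin 3)) :
    (∀ i j, ∑ k, deg6Z π ρ i j k = 0) ∧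
    (∀ i k, ∑ j, deg6Z π ρ i j k = 0) ∧
    (∀ j k, ∑ i, deg6Z π ρ i j k = 0) := by
  revert π ρ
  decide

lemma zker : ∀ z ∈ basicMoves233 ∪ deg6Moves233,
    (∀ i j, ∑ k, z i j k = 0) ∧ (∀ i k, ∑ j, z i j k = 0) ∧
    (∀ j k, ∑ i, z i j k = 0) := by
  rintro z (⟨j1, j2, k1, k2, hj, hk, rfl⟩ | ⟨π, ρ, hd, rfl⟩)
  · exact basicZ_sum j1 j2 k1 k2 hj.ne hk.ne
  · exact deg6Z_sum π ρ

end MB233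

namespace MB233

lemma sum3_swap (a b : Fin 3 → ℕ) (h : a 0 + a 1 + a 2 = b 0 + b 1 + b 2) :
    (∃ k, b k < a k) → (∃ k, a k < b k) := by
  rintro ⟨k, hk⟩
  by_contra hno
  push_neg at hno
  have h0 := hno 0
  have h1 := hno 1
  have h2 := hno 2
  rcases (by decide : ∀ k : Fin 3, k = 0 ∨ k = 1 ∨ k = 2) k with rfl | rfl | rfl <;> omega

lemma sum_zero_of_mem {w : Fin 2 → Fin 3 → Fin 3 → ℤ}
    (hmem : w ∈ basicMoves233 ∪ deg6Moves233 ∨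
      (fun i j k => -(w i j k)) ∈ basicMoves233 ∪ deg6Moves233) :
    (∀ i j, ∑ k, w i j k = 0) ∧ (∀ i k, ∑ j, w i j k = 0) ∧
    (∀ j k, ∑ i, w i j k = 0) := by
  rcases hmem with hm | hm
  · exact zker w hm
  · obtain ⟨k1, k2, k3⟩ := zker _ hm
    refine ⟨fun i j => ?_, fun i k => ?_, fun j k => ?_⟩
    · have := k1 i j; rw [Finset.sum_neg_distrib] at this; omega
    · have := k2 i k; rw [Finset.sum_neg_distrib] at this; omega
    · have := k3 j k; rw [Finset.sum_neg_distrib] at this; omega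

lemma finish (x y : Fin 2 → Fin 3 → Fin 3 → ℕ)
    (h1 : ∀ i j, ∑ k, x i j k = ∑ k, y i j k)
    (h2 : ∀ i k, ∑ j, x i j k = ∑ j, y i j k)
    (h3 : ∀ j k, ∑ i, x i j k = ∑ i, y i j k)
    (w : Fin 2 → Fin 3 → Fin 3 → ℤ)
    (hmem : w ∈ basicMoves233 ∪ deg6Moves233 ∨
      (fun i j k => -(w i j k)) ∈ basicMoves233 ∪ deg6Moves233)
    (hw1 : ∀ q r, w 1 q r = - w 0 q r)
    (hflag : ∀ q r, (w 0 q r = -1 → y 0 q r < x 0 q r) ∧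
      (w 0 q r = 1 → x 0 q r < y 0 q r) ∧
      (w 0 q r = -1 ∨ w 0 q r = 0 ∨ w 0 q r = 1))
    (hnz : ∃ q r, w 0 q r ≠ 0) :
    ∃ x' : Fin 2 → Fin 3 → Fin 3 → ℕ,
      ((fun i j k => (x i j k : ℤ) - x' i j k) ∈ basicMoves233 ∪ deg6Moves233 ∨
       (fun i j k => (x' i j k : ℤ) - x i j k) ∈ basicMoves233 ∪ deg6Moves233) ∧
      (∀ i j, ∑ k, x' i j k = ∑ k, y i j k) ∧
      (∀ i k, ∑ j, x' i j k = ∑ j, y i j k) ∧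
      (∀ j k, ∑ i, x' i j k = ∑ i, y i j k) ∧
      (∑ j, ∑ k, ((x' 0 j k : ℤ) - y 0 j k).natAbs) <
        (∑ j, ∑ k, ((x 0 j k : ℤ) - y 0 j k).natAbs) := by
  obtain ⟨hk1, hk2, hk3⟩ := sum_zero_of_mem hmem
  set x' : Fin 2 → Fin 3 → Fin 3 → ℕ := fun i j k => ((x i j k : ℤ) + w i j k).toNat with hx'
  have hcast0 : ∀ j k, (x' 0 j k : ℤ) = (x 0 j k : ℤ) + w 0 j k := by
    intro j k
    refine Int.toNat_of_nonneg ?_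
    rcases (hflag j k).2.2 with h | h | h
    · have := (hflag j k).1 h; omega
    · omega
    · omega
  have hcast1 : ∀ j k, (x' 1 j k : ℤ) = (x 1 j k : ℤ) + w 1 j k := by
    intro j k
    refine Int.toNat_of_nonneg ?_
    have hs := h3 j k
    rw [Fin.sum_univ_two, Fin.sum_univ_two] at hs
    have hw := hw1 j k
    rcases (hflag j k).2.2 with h | h | h
    · omega
    · omega
    · have := (hflag j k).2.1 h; omega
  have hcast : ∀ i j k, (x' i j k : ℤ) = (x i j k : ℤ) + w i j k := by
    intro i j k
    rcases (by decide : ∀ i : Fin 2, i = 0 ∨ i = 1) i with rfl | rfl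
    · exact hcast0 j k
    · exact hcast1 j k
  refine ⟨x', ?_, ?_, ?_, ?_, ?_⟩
  · -- edge
    rcases hmem with hm | hm
    · refine Or.inr ?_
      have he : (fun i j k => (x' i j k : ℤ) - x i j k) = w := by
        funext i j k
        rw [hcast i j k]
        ring
      rw [he]
      exact hm
    · refine Or.inl ?_
      have he : (fun i j k => (x i j k : ℤ) - x' i j k) = fun i j k => -(w i j k) := by
        funext i j k
        rw [hcast i j k]
        ring
      rw [he]
      exact hm
  · intro i j
    have : ((∑ k, x' i j k : ℕ) : ℤ) = ((∑ k, y i j k : ℕ) : ℤ) := by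
      push_cast
      calc ∑ k, (x' i j k : ℤ) = ∑ k, ((x i j k : ℤ) + w i j k) :=
            Finset.sum_congr rfl (fun k _ => hcast i j k)
        _ = (∑ k, (x i j k : ℤ)) + ∑ k, w i j k := Finset.sum_add_distrib
        _ = ∑ k, (x i j k : ℤ) := by rw [hk1 i j]; ring
        _ = ∑ k, (y i j k : ℤ) := by exact_mod_cast h1 i j
    exact_mod_cast this
  · intro i k
    have : ((∑ j, x' i j k : ℕ) : ℤ) = ((∑ j, y i j k : ℕ) : ℤ) := by
      push_cast
      calc ∑ j, (x' i j k : ℤ) = ∑ j, ((x i j k : ℤ) + w i j k) :=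
            Finset.sum_congr rfl (fun j _ => hcast i j k)
        _ = (∑ j, (x i j k : ℤ)) + ∑ j, w i j k := Finset.sum_add_distrib
        _ = ∑ j, (x i j k : ℤ) := by rw [hk2 i k]; ring
        _ = ∑ j, (y i j k : ℤ) := by exact_mod_cast h2 i k
    exact_mod_cast this
  · intro j k
    have : ((∑ i, x' i j k : ℕ) : ℤ) = ((∑ i, y i j k : ℕ) : ℤ) := by
      push_cast
      calc ∑ i, (x' i j k : ℤ) = ∑ i, ((x i j k : ℤ) + w i j k) :=
            Finset.sum_congr rfl (fun i _ => hcast i j k)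
        _ = (∑ i, (x i j k : ℤ)) + ∑ i, w i j k := Finset.sum_add_distrib
        _ = ∑ i, (x i j k : ℤ) := by rw [hk3 j k]; ring
        _ = ∑ i, (y i j k : ℤ) := by exact_mod_cast h3 j k
    exact_mod_cast this
  · -- distance decreases
    have hcell : ∀ j k, ((x' 0 j k : ℤ) - y 0 j k).natAbs ≤ ((x 0 j k : ℤ) - y 0 j k).natAbs ∧
        (w 0 j k ≠ 0 → ((x' 0 j k : ℤ) - y 0 j k).natAbs < ((x 0 j k : ℤ) - y 0 j k).natAbs) := by
      intro j k
      rw [hcast0 j k]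
      rcases (hflag j k).2.2 with h | h | h
      · have := (hflag j k).1 h; omega
      · omega
      · have := (hflag j k).2.1 h; omega
    obtain ⟨q0, r0, hq0⟩ := hnz
    exact Finset.sum_lt_sum (fun j _ => Finset.sum_le_sum fun k _ => (hcell j k).1)
      ⟨q0, Finset.mem_univ _, Finset.sum_lt_sum (fun k _ => (hcell q0 k).1)
        ⟨r0, Finset.mem_univ _, (hcell q0 r0).2 hq0⟩⟩

end MB233

namespace MB233

lemma descend (x y : Fin 2 → Fin 3 → Fin 3 → ℕ)
    (h1 : ∀ i j, ∑ k, x i j k = ∑ k, y i j k)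
    (h2 : ∀ i k, ∑ j, x i j k = ∑ j, y i j k)
    (h3 : ∀ j k, ∑ i, x i j k = ∑ i, y i j k)
    (hxy : x ≠ y) :
    ∃ x' : Fin 2 → Fin 3 → Fin 3 → ℕ,
      ((fun i j k => (x i j k : ℤ) - x' i j k) ∈ basicMoves233 ∪ deg6Moves233 ∨
       (fun i j k => (x' i j k : ℤ) - x i j k) ∈ basicMoves233 ∪ deg6Moves233) ∧
      (∀ i j, ∑ k, x' i j k = ∑ k, y i j k) ∧
      (∀ i k, ∑ j, x' i j k = ∑ j, y i j k) ∧
      (∀ j k, ∑ i, x' i j k = ∑ i, y i j k) ∧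
      (∑ j, ∑ k, ((x' 0 j k : ℤ) - y 0 j k).natAbs) <
        (∑ j, ∑ k, ((x 0 j k : ℤ) - y 0 j k).natAbs) := by
  classical
  -- slice 0 differs somewhere
  have hx0 : ∃ j k, x 0 j k ≠ y 0 j k := by
    by_contra h0
    push_neg at h0
    apply hxy
    funext i j k
    have hh := h3 j k
    rw [Fin.sum_univ_two, Fin.sum_univ_two] at hh
    have e0 := h0 j k
    rcases (by decide : ∀ i : Fin 2, i = 0 ∨ i = 1) i with rfl | rfl
    · exact e0
    · omega
  set c : Fin 3 → Fin 3 → Fin 3 :=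
    fun j k => if y 0 j k < x 0 j k then 1 else if x 0 j k < y 0 j k then 2 else 0 with hc
  have hcv : ∀ j k, (c j k = 1 ↔ y 0 j k < x 0 j k) ∧ (c j k = 2 ↔ x 0 j k < y 0 j k) := by
    intro j k
    rw [hc]
    dsimp only
    split_ifs with ha hb
    · exact ⟨⟨fun _ => ha, fun _ => rfl⟩,
        ⟨fun h => absurd h (by decide), fun h => absurd h (by omega)⟩⟩
    · exact ⟨⟨fun h => absurd h (by decide), fun h => absurd h ha⟩,
        ⟨fun _ => hb, fun _ => rfl⟩⟩
    · exact ⟨⟨fun h => absurd h (by decide), fun h => absurd h ha⟩,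
        ⟨fun h => absurd h (by decide), fun h => absurd h hb⟩⟩
  have h1' : ∀ j, (∃ k, c j k = 1) ↔ (∃ k, c j k = 2) := by
    intro j
    have hs := h1 0 j
    rw [Fin.sum_univ_three, Fin.sum_univ_three] at hs
    constructor
    · rintro ⟨k, hk⟩
      obtain ⟨k', hk'⟩ := sum3_swap (fun k => x 0 j k) (fun k => y 0 j k) hs
        ⟨k, (hcv j k).1.1 hk⟩
      exact ⟨k', (hcv j k').2.2 hk'⟩
    · rintro ⟨k, hk⟩
      obtain ⟨k', hk'⟩ := sum3_swap (fun k => y 0 j k) (fun k => x 0 j k) hs.symm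
        ⟨k, (hcv j k).2.1 hk⟩
      exact ⟨k', (hcv j k').1.2 hk'⟩
  have h2' : ∀ k, (∃ j, c j k = 1) ↔ (∃ j, c j k = 2) := by
    intro k
    have hs := h2 0 k
    rw [Fin.sum_univ_three, Fin.sum_univ_three] at hs
    constructor
    · rintro ⟨j, hj⟩
      obtain ⟨j', hj'⟩ := sum3_swap (fun j => x 0 j k) (fun j => y 0 j k) hs
        ⟨j, (hcv j k).1.1 hj⟩
      exact ⟨j', (hcv j' k).2.2 hj'⟩
    · rintro ⟨j, hj⟩
      obtain ⟨j', hj'⟩ := sum3_swap (fun j => y 0 j k) (fun j => x 0 j k) hs.symm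
        ⟨j, (hcv j k).2.1 hj⟩
      exact ⟨j', (hcv j' k).1.2 hj'⟩
  have h3' : ∃ j k, c j k = 1 := by
    obtain ⟨j, k, hjk⟩ := hx0
    rcases Nat.lt_trichotomy (x 0 j k) (y 0 j k) with h | h | h
    · obtain ⟨k', hk'⟩ := (h1' j).2 ⟨k, (hcv j k).2.2 h⟩
      exact ⟨j, k', hk'⟩
    · exact absurd h hjk
    · exact ⟨j, k, (hcv j k).1.2 h⟩
  rcases key c h1' h2' h3' with ⟨a, a', b, b', hna, hnb, hS1, hS2, hT1, hT2⟩ |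
    ⟨⟨σ, hσi, hσ⟩, ⟨τ, hτi, hτ⟩⟩
  · -- swap move
    rw [(hcv a b).1] at hS1
    rw [(hcv a' b').1] at hS2
    rw [(hcv a b').2] at hT1
    rw [(hcv a' b).2] at hT2
    obtain ⟨A, A', B, B', hAA, hBB, gS1, gS2, gT1, gT2⟩ :
        ∃ A A' B B' : Fin 3, A < A' ∧ B ≠ B' ∧ (y 0 A B < x 0 A B) ∧
          (y 0 A' B' < x 0 A' B') ∧ (x 0 A B' < y 0 A B') ∧ (x 0 A' B < y 0 A' B) := by
      rcases lt_or_gt_of_ne hna with h | h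
      · exact ⟨a, a', b, b', h, hnb, hS1, hS2, hT1, hT2⟩
      · exact ⟨a', a, b', b, h, hnb.symm, hS2, hS1, hT2, hT1⟩
    set w := basicZ A A' B B' with hw
    have hflag : ∀ q r, (w 0 q r = -1 → y 0 q r < x 0 q r) ∧
        (w 0 q r = 1 → x 0 q r < y 0 q r) ∧
        (w 0 q r = -1 ∨ w 0 q r = 0 ∨ w 0 q r = 1) := by
      intro q r
      rw [hw, basicZ_zero]
      split_ifs with hq1 hr1 hr2 hq2 hr3 hr4 <;> norm_num <;> simp_all
    have hnz : ∃ q r, w 0 q r ≠ 0 := by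
      refine ⟨A, B, ?_⟩
      rw [hw, basicZ_zero, if_pos rfl, if_pos rfl]
      norm_num
    have hmem : w ∈ basicMoves233 ∪ deg6Moves233 ∨
        (fun i j k => -(w i j k)) ∈ basicMoves233 ∪ deg6Moves233 := by
      rcases lt_or_gt_of_ne hBB with hb | hb
      · exact Or.inl (Or.inl (basicZ_mem hAA hb))
      · refine Or.inr (Or.inl ?_)
        rw [show (fun i j k => -(w i j k)) = basicZ A A' B' B from basicZ_neg hBB]
        exact basicZ_mem hAA hb
    exact finish x y h1 h2 h3 w hmem (fun q r => basicZ_one A A' B B' q r) hflag hnz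
  · -- degree-6 move
    have hσ' : ∀ q, y 0 q (σ q) < x 0 q (σ q) := fun q => (hcv q (σ q)).1.1 (hσ q)
    have hτ' : ∀ q, x 0 q (τ q) < y 0 q (τ q) := fun q => (hcv q (τ q)).2.1 (hτ q)
    have hστ : ∀ q, τ q ≠ σ q := by
      intro q h
      have := hσ' q
      rw [← h] at this
      have := hτ' q
      omega
    let eσ : Equiv.Perm (Fin 3) := Equiv.ofBijective σ (Finite.injective_iff_bijective.mp hσi)
    let eτ : Equiv.Perm (Fin 3) := Equiv.ofBijective τ (Finite.injective_iff_bijective.mp hτi)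
    have heσ : ∀ q, eσ q = σ q := fun q => rfl
    have heτ : ∀ q, eτ q = τ q := fun q => rfl
    set w := deg6Z eτ eσ with hw
    have hflag : ∀ q r, (w 0 q r = -1 → y 0 q r < x 0 q r) ∧
        (w 0 q r = 1 → x 0 q r < y 0 q r) ∧
        (w 0 q r = -1 ∨ w 0 q r = 0 ∨ w 0 q r = 1) := by
      intro q r
      rw [hw, deg6Z_zero, heσ, heτ]
      by_cases ht : τ q = r <;> by_cases hs : σ q = r
      · rw [if_pos ht, if_pos hs]; norm_num
      · rw [if_pos ht, if_neg hs]
        norm_num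
        rw [← ht]
        exact hτ' q
      · rw [if_neg ht, if_pos hs]
        norm_num
        rw [← hs]
        exact hσ' q
      · rw [if_neg ht, if_neg hs]; norm_num
    have hnz : ∃ q r, w 0 q r ≠ 0 := by
      refine ⟨0, σ 0, ?_⟩
      rw [hw, deg6Z_zero, heσ, heτ, if_pos rfl, if_neg (hστ 0)]
      norm_num
    have hmem : w ∈ basicMoves233 ∪ deg6Moves233 ∨
        (fun i j k => -(w i j k)) ∈ basicMoves233 ∪ deg6Moves233 := by
      refine Or.inl (Or.inr (deg6Z_mem ?_))
      intro q h
      exact hστ q (by rw [← heτ, ← heσ, h])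
    exact finish x y h1 h2 h3 w hmem (fun q r => deg6Z_one eτ eσ q r) hflag hnz

end MB233


/-- **A Markov basis for the `2 × 3 × 3` no-three-factor-interaction model.**
The 9 basic moves together with the 6 degree-6 moves built from pairs of disjoint `3 × 3`
permutation matrices all lie in `Ker_ℤ(A_{2,3,3})` and form a Markov basis for the
configuration matrix of the no-three-factor-interaction model for `2 × 3 × 3` tables. -/
theorem markovBasis233 :
    (∀ z ∈ basicMoves233 ∪ deg6Moves233,
      (∀ i j, ∑ k, z i j k = 0) ∧ (∀ i k, ∑ j, z i j k = 0) ∧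
      (∀ j k, ∑ i, z i j k = 0)) ∧
    IsMarkovBasisN3 (basicMoves233 ∪ deg6Moves233) := by
  constructor
  · exact MB233.zker
  · unfold IsMarkovBasisN3
    intro x y h1 h2 h3
    suffices H : ∀ n (x y : Fin 2 → Fin 3 → Fin 3 → ℕ),
        (∀ i j, ∑ k, x i j k = ∑ k, y i j k) →
        (∀ i k, ∑ j, x i j k = ∑ j, y i j k) →
        (∀ j k, ∑ i, x i j k = ∑ i, y i j k) →
        (∑ j, ∑ k, ((x 0 j k : ℤ) - y 0 j k).natAbs) = n →
        Relation.ReflTransGen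
          (fun a b : Fin 2 → Fin 3 → Fin 3 → ℕ =>
            (fun i j k => (a i j k : ℤ) - (b i j k : ℤ)) ∈ basicMoves233 ∪ deg6Moves233 ∨
            (fun i j k => (b i j k : ℤ) - (a i j k : ℤ)) ∈ basicMoves233 ∪ deg6Moves233)
          x y by
      exact H _ x y h1 h2 h3 rfl
    intro n
    induction n using Nat.strong_induction_on with
    | _ n ih =>
      intro x y h1 h2 h3 hN
      by_cases hxy : x = y
      · subst hxy
        exact Relation.ReflTransGen.refl
      · obtain ⟨x', hedge, h1', h2', h3', hlt⟩ := MB233.descend x y h1 h2 h3 hxy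
        exact Relation.ReflTransGen.head hedge (ih _ (hN ▸ hlt) x' y h1' h2' h3' rfl)
end
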